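/- arXiv:2504.13833 — 5 statements merged into one kernel-verified Lean document; each statement's English description precedes it below -/
import Mathlib

section
/- For any positive integers m, d, any complex number z and any real r > 0, the d-fold convolution of the uniform distribution on the m-th roots of unity assigns mass at most r + 1/m to the closed ball of center z and radius r. -/
open MeasureTheory

/-- The uniform probability measure on the `m`-th roots of unity in `ℂ`. -/
noncomputable def unifRoots (m : ℕ) : Measure ℂ :=
  (m : ENNReal)⁻¹ • ∑ k ∈ Finset.range m,
    Measure.dirac (Complex.exp (2 * Real.pi * Complex.I * k / m))

/-- The `d`-fold convolution of a measure `μ` on `ℂ`: the law of the sum of `d`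
independent random variables with law `μ`. -/
noncomputable def convPow (μ : Measure ℂ) (d : ℕ) : Measure ℂ :=
  (Measure.pi fun _ : Fin d => μ).map (fun x => ∑ i, x i)

/-!
Write `ζ = exp (2πi/m)`. For `|j| ≤ m/2` the chord from `ζ^a` to `ζ^(a+j)` has length
`2 |sin (πj/m)| ≥ 4|j|/m` (Jordan's inequality). So if `ζ^a` is one of the roots in a closed ball
of radius `r`, every other one is `ζ^(a+j)` with `|j| ≤ mr/2`, and the ball holds at most `mr + 1`
roots: `η_m` gives it mass at most `r + 1/m`. For `d ≥ 1`, `η_m^{*d} = η_m ∗ η_m^{*(d-1)}`, and the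
mass a convolution `μ ∗ ν` with `ν` a probability measure gives to a set is a `ν`-average of the
`μ`-masses of translates of that set, so the bound for `η_m` passes to `η_m^{*d}`.
-/

open Real Complex Finset

theorem ZMod.two_mul_abs_valMinAbs_le {n : ℕ} [NeZero n] (x : ZMod n) :
    2 * |x.valMinAbs| ≤ n := by
  have := x.valMinAbs_mem_Ioc
  rw [Set.mem_Ioc] at this
  rcases abs_cases x.valMinAbs with ⟨h, _⟩ | ⟨h, _⟩ <;> omega

theorem card_le_two_mul_add_one_of_injOn_abs_le {ι : Type*} {S : Finset ι} {f : ι → ℤ}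
    (hf : Set.InjOn f S) {x : ℝ} (hx : 0 ≤ x) (h : ∀ k ∈ S, |(f k : ℝ)| ≤ x) :
    (#S : ℝ) ≤ 2 * x + 1 := by
  set J := ⌊x⌋
  have hmaps : ∀ k ∈ S, f k ∈ Icc (-J) J := fun k hk => by
    rw [mem_Icc, ← abs_le, Int.le_floor, Int.cast_abs]
    exact h k hk
  have hcard : (#(Icc (-J) J) : ℝ) = 2 * J + 1 := by
    have hJ : 0 ≤ J := Int.floor_nonneg.2 hx
    rw [Int.card_Icc, show J + 1 - -J = 2 * J + 1 by ring]
    exact_mod_cast Int.toNat_of_nonneg (by omega)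
  calc (#S : ℝ) ≤ #(Icc (-J) J) := by exact_mod_cast card_le_card_of_injOn f hmaps hf
    _ = 2 * J + 1 := hcard
    _ ≤ 2 * x + 1 := by linarith [Int.floor_le x]

theorem Complex.mul_abs_le_norm_exp_I_mul_ofReal_sub_one {x : ℝ} (hx : |x| ≤ π) :
    2 / π * |x| ≤ ‖exp (I * x) - 1‖ := by
  have hx2 : |x / 2| ≤ π / 2 := by rw [abs_div, abs_two]; linarith
  rw [norm_exp_I_mul_ofReal_sub_one, Real.norm_eq_abs, abs_mul, abs_two]
  calc 2 / π * |x| = 2 * (2 / π * |x / 2|) := by rw [abs_div, abs_two]; ring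
    _ ≤ 2 * |Real.sin (x / 2)| := by gcongr; exact mul_abs_le_abs_sin hx2

theorem four_mul_abs_valMinAbs_div_le_dist_exp {m : ℕ} [NeZero m] (k a : ℕ) :
    4 * |(((k : ZMod m) - a).valMinAbs : ℝ)| / m ≤
      dist (exp (2 * π * I * k / m)) (exp (2 * π * I * a / m)) := by
  set j := ((k : ZMod m) - a).valMinAbs
  have hm : (0 : ℝ) < m := by exact_mod_cast NeZero.pos m
  have hj : 2 * |(j : ℝ)| ≤ m := by exact_mod_cast ZMod.two_mul_abs_valMinAbs_le _
  obtain ⟨t, ht⟩ : (m : ℤ) ∣ k - a - j := by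
    rw [← ZMod.intCast_zmod_eq_zero_iff_dvd]; push_cast [j, ZMod.coe_valMinAbs]; ring
  have hrot : exp (2 * π * I * k / m) =
      exp (2 * π * I * a / m) * exp (I * ↑(2 * π * j / m)) := by
    rw [← Complex.exp_add, Complex.exp_eq_exp_iff_exists_int]
    refine ⟨t, ?_⟩
    have hk : (k : ℂ) = a + j + m * t := by exact_mod_cast (by linarith : (k : ℤ) = a + j + m * t)
    have hmC : (m : ℂ) ≠ 0 := NeZero.ne _
    rw [hk]; push_cast; field_simp
  have hunit : ‖exp (2 * π * I * a / m)‖ = 1 := by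
    rw [Complex.norm_exp]; simp
  calc 4 * |(j : ℝ)| / m = 2 / π * |2 * π * j / m| := by
        rw [abs_div, abs_mul, abs_of_pos (by positivity : 0 < 2 * π), abs_of_pos hm]
        field_simp; ring
    _ ≤ ‖exp (I * ↑(2 * π * j / m)) - 1‖ := by
        refine mul_abs_le_norm_exp_I_mul_ofReal_sub_one ?_
        rw [abs_div, abs_mul, abs_of_pos (by positivity : 0 < 2 * π), abs_of_pos hm,
          div_le_iff₀ hm]
        nlinarith [pi_pos]
    _ = dist (exp (2 * π * I * k / m)) (exp (2 * π * I * a / m)) := by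
        rw [dist_eq_norm, hrot, ← mul_sub_one, norm_mul, hunit, one_mul]

theorem card_le_of_forall_dist_exp_le {m : ℕ} {S : Finset ℕ} (hS : S ⊆ range m) {a : ℕ}
    (ha : a ∈ S) {δ : ℝ}
    (h : ∀ k ∈ S, dist (exp (2 * π * I * k / m)) (exp (2 * π * I * a / m)) ≤ δ) :
    (#S : ℝ) ≤ m * δ / 2 + 1 := by
  have : NeZero m := ⟨by have := mem_range.1 (hS ha); omega⟩
  have hm : (0 : ℝ) < m := by exact_mod_cast NeZero.pos m
  have hinj : Set.InjOn (fun k : ℕ => ((k : ZMod m) - a).valMinAbs) S := by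
    intro k hk k' hk' hkk'
    have hmod := (ZMod.natCast_eq_natCast_iff' k k' m).1
      (sub_left_injective (ZMod.injective_valMinAbs hkk'))
    rwa [Nat.mod_eq_of_lt (mem_range.1 (hS hk)), Nat.mod_eq_of_lt (mem_range.1 (hS hk'))] at hmod
  have hδ : 0 ≤ δ := dist_self (exp (2 * π * I * a / m)) ▸ h a ha
  have hbound : ∀ k ∈ S, |(((k : ZMod m) - a).valMinAbs : ℝ)| ≤ m * δ / 4 := fun k hk => by
    have := (four_mul_abs_valMinAbs_div_le_dist_exp k a).trans (h k hk)
    rw [div_le_iff₀ hm] at this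
    linarith
  calc (#S : ℝ) ≤ 2 * (m * δ / 4) + 1 :=
        card_le_two_mul_add_one_of_injOn_abs_le hinj (by positivity) hbound
    _ = m * δ / 2 + 1 := by ring

open scoped Classical in
theorem unifRoots_apply (m : ℕ) (s : Set ℂ) :
    unifRoots m s =
      (m : ENNReal)⁻¹ * #{k ∈ range m | exp (2 * π * I * ((k : ℕ) : ℂ) / m) ∈ s} := by
  simp only [unifRoots, Measure.smul_apply, smul_eq_mul, Measure.finsetSum_apply,
    Measure.dirac_apply, Set.indicator_apply, Pi.one_apply, sum_boole]

theorem isProbabilityMeasure_unifRoots {m : ℕ} (hm : 0 < m) :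
    IsProbabilityMeasure (unifRoots m) := by
  constructor
  rw [unifRoots_apply]
  simp only [Set.mem_univ, filter_true, card_range]
  exact ENNReal.inv_mul_cancel (by exact_mod_cast hm.ne') (ENNReal.natCast_ne_top m)

theorem unifRoots_closedBall_le (m : ℕ) (c : ℂ) (r : ℝ) :
    unifRoots m (Metric.closedBall c r) ≤ ENNReal.ofReal (r + 1 / m) := by
  classical
  rw [unifRoots_apply]
  set S := {k ∈ range m | exp (2 * π * I * ((k : ℕ) : ℂ) / m) ∈ Metric.closedBall c r}
  obtain hS | ⟨a, ha⟩ := S.eq_empty_or_nonempty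
  · simp [hS]
  have hm : (0 : ℝ) < m := by exact_mod_cast (mem_range.1 (mem_filter.1 ha).1).pos
  have hr : 0 ≤ r := dist_nonneg.trans (mem_filter.1 ha).2
  have hcard : (#S : ℝ) ≤ m * r + 1 := by
    have hδ : ∀ k ∈ S, dist (exp (2 * π * I * k / m)) (exp (2 * π * I * a / m)) ≤ r + r :=
      fun k hk => (dist_triangle_right _ _ c).trans
        (add_le_add (mem_filter.1 hk).2 (mem_filter.1 ha).2)
    linarith [card_le_of_forall_dist_exp_le (filter_subset _ _) ha hδ]
  have hm₀ : (m : ENNReal) ≠ 0 := by exact_mod_cast hm.ne'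
  rw [ENNReal.le_ofReal_iff_toReal_le (by finiteness) (by positivity), ENNReal.toReal_mul,
    ENNReal.toReal_inv, ENNReal.toReal_natCast, ENNReal.toReal_natCast, inv_mul_le_iff₀ hm,
    mul_add, mul_one_div_cancel hm.ne']
  exact hcard

theorem MeasureTheory.Measure.conv_apply_le_of_forall_preimage_add_le {M : Type*} [AddMonoid M]
    [MeasurableSpace M] [MeasurableAdd₂ M] {μ ν : Measure M} [SFinite μ] [SFinite ν]
    [IsZeroOrProbabilityMeasure ν] {s : Set M} (hs : MeasurableSet s) {c : ENNReal}
    (h : ∀ y, μ ((· + y) ⁻¹' s) ≤ c) : (μ ∗ ν) s ≤ c :=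
  calc (μ ∗ ν) s = ∫⁻ y, μ ((· + y) ⁻¹' s) ∂ν := by
        rw [conv, map_apply measurable_add hs, prod_apply_symm (measurable_add hs)]; rfl
    _ ≤ ∫⁻ _, c ∂ν := lintegral_mono h
    _ ≤ c := by rw [lintegral_const]; exact mul_le_of_le_one_right' prob_le_one

instance (μ : Measure ℂ) [IsProbabilityMeasure μ] (n : ℕ) : IsProbabilityMeasure (convPow μ n) :=
  Measure.isProbabilityMeasure_map (by fun_prop)

theorem convPow_succ (μ : Measure ℂ) [SigmaFinite μ] (n : ℕ) :
    convPow μ (n + 1) = μ ∗ convPow μ n := by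
  have hsplit := (measurePreserving_piFinSuccAbove (fun _ : Fin (n + 1) => μ) 0).symm
  have hsum : (fun x : Fin (n + 1) → ℂ => ∑ i, x i) ∘
      (MeasurableEquiv.piFinSuccAbove (fun _ => ℂ) 0).symm =
      (fun p : ℂ × ℂ => p.1 + p.2) ∘ Prod.map id (fun y : Fin n → ℂ => ∑ i, y i) := by
    ext p
    simp [MeasurableEquiv.piFinSuccAbove, Fin.insertNthEquiv, Fin.insertNth_zero', Fin.sum_cons]
  rw [convPow, ← hsplit.map_eq, Measure.map_map (by fun_prop) (by fun_prop), hsum,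
    ← Measure.map_map (by fun_prop) (by fun_prop),
    ← Measure.map_prod_map _ _ measurable_id (by fun_prop), Measure.map_id, Measure.conv, convPow]

theorem smallBallLinear_general (m d : ℕ) (hm : 0 < m) (hd : 0 < d) (z : ℂ) (r : ℝ) :
    convPow (unifRoots m) d (Metric.closedBall z r) ≤ ENNReal.ofReal (r + 1 / m) := by
  have := isProbabilityMeasure_unifRoots hm
  obtain ⟨n, rfl⟩ := Nat.exists_eq_succ_of_ne_zero hd.ne'
  rw [convPow_succ]
  refine Measure.conv_apply_le_of_forall_preimage_add_le measurableSet_closedBall fun y => ?_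
  rw [Metric.preimage_add_right_closedBall]
  exact unifRoots_closedBall_le m (z - y) r

theorem smallBallLinear (m d : ℕ) (hm : 0 < m) (hd : 0 < d) (z : ℂ) (r : ℝ) (hr : 0 < r) :
    convPow (unifRoots m) d (Metric.closedBall z r) ≤ ENNReal.ofReal (r + 1 / m) :=
  smallBallLinear_general m d hm hd z r
end

section
/- Let m and d be positive integers and let z be a nonzero complex number that is a sum of d (not necessarily distinct) m-th roots of unity. Then |z| ≥ d^{1−φ(m)}, where φ is Euler's totient function. -/
/-!
The sum `w` of the roots of unity lies in the cyclotomic field `K = ℚ(ζ_m)`, of degree `φ(m)`,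
and is a nonzero algebraic integer, so its norm `N(w) = ∏_σ σ(w)` is a nonzero integer. Every
conjugate `σ(w)` is again a sum of `d` roots of unity, hence has absolute value at most `d`.
Thus `1 ≤ |N(w)| ≤ |z| · d ^ (φ(m) - 1)`.
-/

open NumberField Polynomial IntermediateField

namespace NumberField

variable {K : Type*} [Field K] [NumberField K]

lemma one_le_norm_algebraNorm_of_isIntegral {α : K} (hα : IsIntegral ℤ α) (hα0 : α ≠ 0) :
    1 ≤ ‖Algebra.norm ℚ α‖ := by
  obtain ⟨n, hn⟩ := IsIntegrallyClosed.isIntegral_iff.mp (Algebra.isIntegral_norm ℚ hα)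
  have hn0 : n ≠ 0 := by
    rintro rfl
    exact hα0 (by simpa using hn.symm)
  rw [← hn, eq_intCast, Int.norm_cast_rat, Int.norm_eq_abs]
  exact_mod_cast Int.one_le_abs hn0

lemma one_le_norm_mul_house_pow_of_isIntegral {α : K} (hα : IsIntegral ℤ α) (hα0 : α ≠ 0)
    (σ : K →+* ℂ) : 1 ≤ ‖σ α‖ * house α ^ (Module.finrank ℚ K - 1) :=
  (one_le_norm_algebraNorm_of_isIntegral hα hα0).trans (norm_norm_le_norm_mul_house_pow α σ)

lemma house_le_one_of_pow_eq_one {x : K} {m : ℕ} (hm : m ≠ 0) (hx : x ^ m = 1) :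
    house x ≤ 1 := by
  rw [house_eq_sup', ← NNReal.coe_one, NNReal.coe_le_coe]
  refine Finset.sup'_le _ _ fun σ _ => ?_
  rw [← NNReal.coe_le_coe, coe_nnnorm, NNReal.coe_one,
    Complex.norm_eq_one_of_pow_eq_one (by rw [← map_pow, hx, map_one]) hm]

lemma house_sum_le_card_of_pow_eq_one {ι : Type*} (s : Finset ι) {x : ι → K} {m : ℕ}
    (hm : m ≠ 0) (hx : ∀ i ∈ s, x i ^ m = 1) : house (∑ i ∈ s, x i) ≤ s.card :=
  calc house (∑ i ∈ s, x i) ≤ ∑ i ∈ s, house (x i) := house_sum_le_sum_house s x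
    _ ≤ ∑ _i ∈ s, (1 : ℝ) :=
        Finset.sum_le_sum fun i hi => house_le_one_of_pow_eq_one hm (hx i hi)
    _ = s.card := by simp

end NumberField

lemma IsPrimitiveRoot.finrank_adjoin_rat {ζ : ℂ} {m : ℕ} (hζ : IsPrimitiveRoot ζ m) (hm : 0 < m) :
    Module.finrank ℚ ℚ⟮ζ⟯ = m.totient := by
  rw [adjoin.finrank (hζ.isIntegral hm).tower_top, ← cyclotomic_eq_minpoly_rat hζ hm,
    natDegree_cyclotomic]

lemma IsPrimitiveRoot.numberField_adjoin_rat {ζ : ℂ} {m : ℕ} (hζ : IsPrimitiveRoot ζ m)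
    (hm : 0 < m) : NumberField ℚ⟮ζ⟯ where
  to_finiteDimensional := adjoin.finiteDimensional (hζ.isIntegral hm).tower_top

lemma IsPrimitiveRoot.mem_adjoin_rat_of_pow_eq_one {ζ x : ℂ} {m : ℕ} (hζ : IsPrimitiveRoot ζ m)
    (hm : 0 < m) (hx : x ^ m = 1) : x ∈ ℚ⟮ζ⟯ := by
  have := NeZero.of_pos hm
  obtain ⟨k, -, rfl⟩ := hζ.eq_pow_of_pow_eq_one hx
  exact pow_mem (mem_adjoin_simple_self ℚ ζ) k

theorem small_sum_roots_of_unity_general (m d : ℕ) (hm : 0 < m)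
    (z : ℂ) (hz : z ≠ 0) (f : Fin d → ℂ) (hf : ∀ i, f i ^ m = 1)
    (hsum : z = ∑ i, f i) :
    (d : ℝ) ^ ((1 : ℤ) - (Nat.totient m : ℤ)) ≤ ‖z‖ := by
  have hζ := Complex.isPrimitiveRoot_exp m hm.ne'
  set K := ℚ⟮Complex.exp (2 * Real.pi * Complex.I / m)⟯
  have := hζ.numberField_adjoin_rat hm
  let g : Fin d → K := fun i => ⟨f i, hζ.mem_adjoin_rat_of_pow_eq_one hm (hf i)⟩
  have hg : ∀ i ∈ Finset.univ, g i ^ m = 1 := fun i _ => Subtype.ext (hf i)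
  have hzw : K.val (∑ i, g i) = z := by simp [g, hsum]
  have hw0 : ∑ i, g i ≠ 0 := fun h => hz (by rw [← hzw, h, map_zero])
  have hwint : IsIntegral ℤ (∑ i, g i) :=
    IsIntegral.sum _ fun i hi => .of_pow hm (by rw [hg i hi]; exact isIntegral_one)
  have key : 1 ≤ ‖z‖ * (d : ℝ) ^ (m.totient - 1) := by
    calc 1 ≤ ‖K.val (∑ i, g i)‖ * house (∑ i, g i) ^ (Module.finrank ℚ K - 1) :=
          one_le_norm_mul_house_pow_of_isIntegral hwint hw0 K.val.toRingHom
      _ ≤ ‖z‖ * (d : ℝ) ^ (m.totient - 1) := by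
          rw [hzw, hζ.finrank_adjoin_rat hm]
          gcongr
          · exact house_nonneg _
          · simpa using house_sum_le_card_of_pow_eq_one Finset.univ hm.ne' hg
  have hpow : 0 < (d : ℝ) ^ (m.totient - 1) :=
    pos_of_mul_pos_right (one_pos.trans_le key) (norm_nonneg z)
  rw [show (1 : ℤ) - m.totient = -((m.totient - 1 : ℕ) : ℤ) by
      have := Nat.totient_pos.mpr hm; omega, zpow_neg, zpow_natCast, inv_le_iff_one_le_mul₀ hpow]
  exact key

theorem small_sum_roots_of_unity (m d : ℕ) (hm : 0 < m) (hd : 0 < d)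
    (z : ℂ) (hz : z ≠ 0) (f : Fin d → ℂ) (hf : ∀ i, f i ^ m = 1)
    (hsum : z = ∑ i, f i) :
    (d : ℝ) ^ ((1 : ℤ) - (Nat.totient m : ℤ)) ≤ ‖z‖ :=
  small_sum_roots_of_unity_general m d hm z hz f hf hsum
end

section
/- Fix positive integers m, d, K. Define the function g_k : ℕ → ℝ by g_k(n) = 1/n^d if k divides n and g_k(n) = 0 otherwise. Then for every positive integer n, |δ_m(n) − m^d · Σ_{k=1}^{K} μ(k)·g_{km}(n)| ≤ 1/K, where δ_m(n) = 1 if n = m and 0 otherwise, and μ is the Möbius function. -/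
/-!
Only multiples `n = m q` contribute, and after cancelling `m ^ d` the expression becomes
`(δ₁(q) - ∑_{k ∣ q, k ≤ K} μ(k)) / q ^ d`. Since `∑_{k ∣ q} μ(k) = δ₁(q)`, the numerator is the tail
`∑_{k ∣ q, k > K} μ(k)`, whose size is at most the number of divisors of `q` exceeding `K`. Via
`k ↦ q / k` these are at most `q / (K + 1)`, so `K` times the numerator is at most `q ≤ q ^ d`.
-/

open Finset ArithmeticFunction
open scoped ArithmeticFunction.Moebius

theorem sum_divisors_moebius (n : ℕ) : ∑ k ∈ n.divisors, μ k = if n = 1 then 1 else 0 := by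
  rw [← coe_mul_zeta_apply, moebius_mul_coe_zeta, one_apply]

theorem card_filter_lt_divisors_le (q K : ℕ) : #{k ∈ q.divisors | K < k} ≤ q / (K + 1) := by
  calc #{k ∈ q.divisors | K < k} ≤ #(Icc 1 (q / (K + 1))) := by
        refine card_le_card_of_injOn (q / ·) (fun k hk => ?_) (fun k₁ hk₁ k₂ hk₂ h => ?_)
        · simp only [coe_filter, Nat.mem_divisors, Set.mem_ofPred_eq] at hk
          obtain ⟨⟨hkq, hq⟩, hKk⟩ := hk
          simp only [coe_Icc, Set.mem_Icc]
          exact ⟨Nat.div_pos (Nat.le_of_dvd (Nat.pos_of_ne_zero hq) hkq) (by omega),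
            Nat.div_le_div_left hKk (by omega)⟩
        · simp only [coe_filter, Nat.mem_divisors, Set.mem_ofPred_eq] at hk₁ hk₂
          rw [← Nat.div_div_self hk₁.1.1 hk₁.1.2, ← Nat.div_div_self hk₂.1.1 hk₂.1.2]
          exact congrArg (q / ·) h
    _ = q / (K + 1) := by simp

theorem abs_sum_moebius_filter_lt_divisors_le (q K : ℕ) :
    |∑ k ∈ q.divisors with K < k, μ k| ≤ ((q / (K + 1) : ℕ) : ℤ) :=
  calc |∑ k ∈ q.divisors with K < k, μ k| ≤ ∑ k ∈ q.divisors with K < k, |μ k| :=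
        abs_sum_le_sum_abs _ _
    _ ≤ #{k ∈ q.divisors | K < k} := by
        simpa using sum_le_card_nsmul _ _ 1 fun k _ => abs_moebius_le_one
    _ ≤ _ := by exact_mod_cast card_filter_lt_divisors_le q K

theorem mul_abs_sub_sum_moebius_filter_le_divisors_le (q K : ℕ) :
    K * |(if q = 1 then (1 : ℤ) else 0) - ∑ k ∈ q.divisors with k ≤ K, μ k| ≤ q := by
  rw [← sum_divisors_moebius, ← sum_filter_add_sum_filter_not q.divisors (· ≤ K),
    add_sub_cancel_left]
  simp only [not_le]
  calc (K : ℤ) * |∑ k ∈ q.divisors with K < k, μ k| ≤ K * ((q / (K + 1) : ℕ) : ℤ) := by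
        gcongr; exact abs_sum_moebius_filter_lt_divisors_le q K
    _ ≤ q := by
        exact_mod_cast (Nat.mul_le_mul_right _ K.le_succ).trans (Nat.mul_div_le q (K + 1))

theorem delta_sub_sum_moebius_eq_div (m q d K : ℕ) (hm : m ≠ 0) (hq : q ≠ 0) :
    (if m * q = m then (1 : ℝ) else 0) - (m : ℝ) ^ d * ∑ k ∈ Icc 1 K, (μ k : ℝ) *
        (if k * m ∣ m * q then 1 / ((m * q : ℕ) : ℝ) ^ d else 0)
      = ((if q = 1 then (1 : ℤ) else 0) - ∑ k ∈ q.divisors with k ≤ K, μ k : ℤ) / (q : ℝ) ^ d := by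
  have hfilter : {k ∈ Icc 1 K | k ∣ q} = {k ∈ q.divisors | k ≤ K} := by
    ext k
    simp only [mem_filter, mem_Icc, Nat.mem_divisors]
    constructor
    · rintro ⟨⟨-, hkK⟩, hkq⟩; exact ⟨⟨hkq, hq⟩, hkK⟩
    · rintro ⟨⟨hkq, -⟩, hkK⟩; exact ⟨⟨Nat.pos_of_dvd_of_pos hkq (Nat.pos_of_ne_zero hq), hkK⟩, hkq⟩
  have hdvd : ∀ k, k * m ∣ m * q ↔ k ∣ q := fun k => by
    rw [mul_comm k m]; exact Nat.mul_dvd_mul_iff_left (Nat.pos_of_ne_zero hm)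
  simp only [hdvd, mul_ite, mul_zero, ← sum_filter, hfilter, mul_eq_left₀ hm]
  have hdelta : (if q = 1 then (1 : ℝ) else 0) = (if q = 1 then 1 else 0) / (q : ℝ) ^ d := by
    split_ifs with h <;> simp [h]
  rw [hdelta, ← sum_mul]
  push_cast
  field_simp
  ring

theorem moebius_delta_approx_general (m d K : ℕ) (hd : 0 < d) (hK : 0 < K)
    (n : ℕ) (hn : 0 < n) :
    |(if n = m then (1 : ℝ) else 0)
        - (m : ℝ) ^ d * ∑ k ∈ Finset.Icc 1 K, (ArithmeticFunction.moebius k : ℝ) *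
            (if k * m ∣ n then 1 / (n : ℝ) ^ d else 0)| ≤ 1 / K := by
  by_cases hmn : m ∣ n
  · obtain ⟨q, rfl⟩ := hmn
    have hm : m ≠ 0 := left_ne_zero_of_mul hn.ne'
    have hq : q ≠ 0 := right_ne_zero_of_mul hn.ne'
    rw [delta_sub_sum_moebius_eq_div m q d K hm hq, abs_div, ← Int.cast_abs, abs_pow,
      Nat.abs_cast, div_le_div_iff₀ (by positivity) (by positivity), one_mul, mul_comm]
    calc (K : ℝ) * _ ≤ q := by exact_mod_cast mul_abs_sub_sum_moebius_filter_le_divisors_le q K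
      _ ≤ (q : ℝ) ^ d := le_self_pow₀ (by exact_mod_cast Nat.one_le_iff_ne_zero.mpr hq) hd.ne'
  · have hnm : n ≠ m := fun h => hmn (h ▸ dvd_rfl)
    have hkm : ∀ k, ¬ k * m ∣ n := fun k h => hmn (dvd_of_mul_left_dvd h)
    simp only [hnm, hkm, if_false, mul_zero, sum_const_zero, sub_zero, abs_zero]
    positivity

theorem moebius_delta_approx (m d K : ℕ) (hm : 0 < m) (hd : 0 < d) (hK : 0 < K)
    (n : ℕ) (hn : 0 < n) :
    |(if n = m then (1 : ℝ) else 0)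
        - (m : ℝ) ^ d * ∑ k ∈ Finset.Icc 1 K, (ArithmeticFunction.moebius k : ℝ) *
            (if k * m ∣ n then 1 / (n : ℝ) ^ d else 0)| ≤ 1 / K :=
  moebius_delta_approx_general m d K hd hK n hn
end

section
/- Let G be a finite abelian group, let r, s be positive integers, and let A be an r × s matrix with integer entries. Then the probability that a uniformly random x ∈ G^s satisfies Ax = 0 equals the probability that a uniformly random y ∈ G^r satisfies Aᵀy = 0. -/
open Finset

section Aux

variable {G : Type*} [AddCommGroup G] [Fintype G]

private lemma addChar_sum_apply {ι : Type*} (t : Finset ι) (f : ι → AddChar G ℂ) (a : G) :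
    (∑ i ∈ t, f i) a = ∏ i ∈ t, f i a := by
  induction t using Finset.cons_induction with
  | empty => simp
  | cons i t hi ih => rw [Finset.sum_cons, Finset.prod_cons, AddChar.add_apply, ih]

private lemma addChar_map_sum {ι : Type*} (t : Finset ι) (ψ : AddChar G ℂ) (f : ι → G) :
    ψ (∑ i ∈ t, f i) = ∏ i ∈ t, ψ (f i) := by
  induction t using Finset.cons_induction with
  | empty => simp
  | cons i t hi ih => rw [Finset.sum_cons, Finset.prod_cons, AddChar.map_add_eq_mul, ih]

private lemma nonempty_addEquiv_addChar (G : Type*) [AddCommGroup G] [Fintype G] :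
    Nonempty (G ≃+ AddChar G ℂ) := by
  have h0 : NeZero ((Monoid.exponent (Multiplicative G) : ℂ)) :=
    ⟨Nat.cast_ne_zero.mpr Monoid.exponent_ne_zero_of_finite⟩
  obtain ⟨e⟩ := CommGroup.monoidHom_mulEquiv_of_hasEnoughRootsOfUnity (Multiplicative G) ℂ
  let e2 : (Multiplicative G →* ℂ) ≃* (Multiplicative G →* ℂˣ) :=
  { toFun := MonoidHom.toHomUnits
    invFun := fun f => (Units.coeHom ℂ).comp f
    left_inv := fun f => by ext x; rfl
    right_inv := fun f => by ext x; rfl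
    map_mul' := fun f g => by ext x; rfl }
  let e3 : AddChar G ℂ ≃* (Multiplicative G →* ℂ) :=
  { AddChar.toMonoidHomEquiv with map_mul' := fun f g => by ext x; rfl }
  let m : AddChar G ℂ ≃* Multiplicative G := e3.trans (e2.trans e)
  exact ⟨{ toFun := fun g => m.symm (Multiplicative.ofAdd g)
           invFun := fun χ => Multiplicative.toAdd (m χ)
           left_inv := fun g => by simp
           right_inv := fun χ => by simp
           map_add' := fun a b =>
             m.symm.map_mul (Multiplicative.ofAdd a) (Multiplicative.ofAdd b) }⟩

private lemma char_count_key (r s : ℕ) (A : Matrix (Fin r) (Fin s) ℤ) :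
    (Nat.card {x : Fin s → G // ∀ i, ∑ j, A i j • x j = 0} : ℂ) * (Fintype.card G : ℂ) ^ r
      = (Nat.card {χ : Fin r → AddChar G ℂ // ∀ j, ∑ i, A i j • χ i = 0} : ℂ)
          * (Fintype.card G : ℂ) ^ s := by
  classical
  have h1 : ∑ x : Fin s → G, ∑ χ : Fin r → AddChar G ℂ, ∏ i, (χ i) (∑ j, A i j • x j)
      = (Nat.card {x : Fin s → G // ∀ i, ∑ j, A i j • x j = 0} : ℂ)
          * (Fintype.card G : ℂ) ^ r := by
    have inner : ∀ x : Fin s → G,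
        ∑ χ : Fin r → AddChar G ℂ, ∏ i, (χ i) (∑ j, A i j • x j)
          = if (∀ i, ∑ j, A i j • x j = 0) then (Fintype.card G : ℂ) ^ r else 0 := by
      intro x
      rw [← Fintype.prod_sum (f := fun i (ψ : AddChar G ℂ) => ψ (∑ j, A i j • x j))]
      simp_rw [AddChar.sum_apply_eq_ite]
      rw [Fintype.prod_ite_zero]
      simp [Finset.prod_const, Finset.card_univ]
    simp_rw [inner]
    rw [Finset.sum_ite, Finset.sum_const, Finset.sum_const_zero, add_zero, nsmul_eq_mul]
    congr 1
    rw [Nat.card_eq_fintype_card, Fintype.card_subtype]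
  have h2 : ∑ χ : Fin r → AddChar G ℂ, ∑ x : Fin s → G, ∏ i, (χ i) (∑ j, A i j • x j)
      = (Nat.card {χ : Fin r → AddChar G ℂ // ∀ j, ∑ i, A i j • χ i = 0} : ℂ)
          * (Fintype.card G : ℂ) ^ s := by
    have inner : ∀ χ : Fin r → AddChar G ℂ,
        ∑ x : Fin s → G, ∏ i, (χ i) (∑ j, A i j • x j)
          = if (∀ j, ∑ i, A i j • χ i = 0) then (Fintype.card G : ℂ) ^ s else 0 := by
      intro χ
      have hrw : ∀ x : Fin s → G, ∏ i, (χ i) (∑ j, A i j • x j)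
          = ∏ j, (∑ i, A i j • χ i) (x j) := by
        intro x
        simp_rw [addChar_map_sum]
        rw [Finset.prod_comm]
        congr 1; ext j
        rw [addChar_sum_apply]
        congr 1; ext i
        rw [AddChar.zsmul_apply, AddChar.map_zsmul_eq_zpow]
      simp_rw [hrw]
      rw [← Fintype.prod_sum (f := fun j (g : G) => (∑ i, A i j • χ i) g)]
      simp_rw [AddChar.sum_eq_ite]
      rw [Fintype.prod_ite_zero]
      simp [Finset.prod_const, Finset.card_univ]
    simp_rw [inner]
    rw [Finset.sum_ite, Finset.sum_const, Finset.sum_const_zero, add_zero, nsmul_eq_mul]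
    congr 1
    rw [Nat.card_eq_fintype_card, Fintype.card_subtype]
  rw [← h1, ← h2, Finset.sum_comm]

end Aux

theorem lin_sys_transpose {G : Type*} [AddCommGroup G] [Fintype G]
    (r s : ℕ) (hr : 0 < r) (hs : 0 < s) (A : Matrix (Fin r) (Fin s) ℤ) :
    (Nat.card {x : Fin s → G // ∀ i, ∑ j, A i j • x j = 0} : ℚ) / (Fintype.card G : ℚ) ^ s
      = (Nat.card {y : Fin r → G // ∀ j, ∑ i, A i j • y i = 0} : ℚ)
          / (Fintype.card G : ℚ) ^ r := by
  classical
  obtain ⟨e⟩ := nonempty_addEquiv_addChar G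
  have hcard : Nat.card {χ : Fin r → AddChar G ℂ // ∀ j, ∑ i, A i j • χ i = 0}
      = Nat.card {y : Fin r → G // ∀ j, ∑ i, A i j • y i = 0} := by
    apply Nat.card_congr
    refine Equiv.subtypeEquiv (Equiv.piCongrRight fun _ => e.symm.toEquiv) fun χ => ?_
    refine forall_congr' fun j => ?_
    have : ∑ i, A i j • e.symm (χ i) = e.symm (∑ i, A i j • χ i) := by
      rw [map_sum]
      exact Finset.sum_congr rfl fun i _ => (map_zsmul e.symm _ _).symm
    simp only [Equiv.piCongrRight_apply, AddEquiv.toEquiv_eq_coe, EquivLike.coe_coe,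
      Pi.map_apply, this]
    exact EmbeddingLike.map_eq_zero_iff.symm
  have key := char_count_key (G := G) r s A
  rw [hcard] at key
  have keyN : Nat.card {x : Fin s → G // ∀ i, ∑ j, A i j • x j = 0} * Fintype.card G ^ r
      = Nat.card {y : Fin r → G // ∀ j, ∑ i, A i j • y i = 0} * Fintype.card G ^ s := by
    exact_mod_cast key
  have hc : (0 : ℚ) < (Fintype.card G : ℚ) := by
    exact_mod_cast Fintype.card_pos
  rw [div_eq_div_iff (by positivity) (by positivity)]
  exact_mod_cast keyN
end

section
/- Let G be a finite abelian group, d ≥ 1, and let X_1, …, X_d be independent uniformly random elements of G. For integer coefficient vectors p, p' ∈ ℤ^d, define events E = {Σ_i p_i·X_i = 0} and E' = {Σ_i p'_i·X_i = 0}. Then Cov(1_E, 1_{E'}) ≥ 0, i.e. P(E ∩ E') ≥ P(E)·P(E'). -/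
/-!
The solution sets of the two equations are subgroups `H` and `K` of `G^d`, and the three
probabilities are `|H|/|G^d|`, `|K|/|G^d|` and `|H ⊓ K|/|G^d|`. So the claim is
`|H| |K| ≤ |H ⊓ K| |G^d|`, i.e. `[G^d : H ⊓ K] ≤ [G^d : H] [G^d : K]`, which holds for any two
subgroups of a finite group.
-/

@[to_additive AddSubgroup.card_mul_card_le_card_inf_mul_card]
theorem Subgroup.card_mul_card_le_card_inf_mul_card {G : Type*} [Group G] [Finite G]
    (H K : Subgroup G) : Nat.card H * Nat.card K ≤ Nat.card ↥(H ⊓ K) * Nat.card G := by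
  refine Nat.le_of_mul_le_mul_right ?_ (Nat.pos_of_ne_zero (H ⊓ K).index_ne_zero_of_finite)
  calc Nat.card H * Nat.card K * (H ⊓ K).index
      ≤ Nat.card H * Nat.card K * (H.index * K.index) := by gcongr; exact index_inf_le
    _ = Nat.card H * H.index * (Nat.card K * K.index) := by ring
    _ = Nat.card G * Nat.card G := by rw [card_mul_index, card_mul_index]
    _ = Nat.card ↥(H ⊓ K) * Nat.card G * (H ⊓ K).index := by rw [mul_right_comm, card_mul_index]

def intLinearForm {ι G : Type*} [Fintype ι] [AddCommGroup G] (p : ι → ℤ) : (ι → G) →+ G where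
  toFun x := ∑ i, p i • x i
  map_zero' := by simp
  map_add' x y := by simp [smul_add, Finset.sum_add_distrib]

theorem linear_events_positively_correlated_general {G : Type*} [AddCommGroup G] [Fintype G]
    (d : ℕ) (p p' : Fin d → ℤ) :
    ((Nat.card {x : Fin d → G // ∑ i, p i • x i = 0} : ℚ) / (Fintype.card G : ℚ) ^ d)
      * ((Nat.card {x : Fin d → G // ∑ i, p' i • x i = 0} : ℚ) / (Fintype.card G : ℚ) ^ d)
    ≤ (Nat.card {x : Fin d → G //
          (∑ i, p i • x i = 0) ∧ (∑ i, p' i • x i = 0)} : ℚ)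
        / (Fintype.card G : ℚ) ^ d := by
  have hcard : Nat.card {x : Fin d → G // ∑ i, p i • x i = 0}
      * Nat.card {x : Fin d → G // ∑ i, p' i • x i = 0}
      ≤ Nat.card {x : Fin d → G // (∑ i, p i • x i = 0) ∧ (∑ i, p' i • x i = 0)}
        * Fintype.card G ^ d := by
    -- the kernels of the two forms are the solution sets up to definitional unfolding
    have := AddSubgroup.card_mul_card_le_card_inf_mul_card
      (intLinearForm (G := G) p).ker (intLinearForm p').ker
    rwa [Nat.card_fun, Nat.card_fin, Nat.card_eq_fintype_card (α := G)] at this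
  rw [div_mul_div_comm, div_le_div_iff₀ (by positivity) (by positivity), ← mul_assoc]
  gcongr ?_ * _
  exact_mod_cast hcard

theorem linear_events_positively_correlated {G : Type*} [AddCommGroup G] [Fintype G]
    (d : ℕ) (hd : 0 < d) (p p' : Fin d → ℤ) :
    ((Nat.card {x : Fin d → G // ∑ i, p i • x i = 0} : ℚ) / (Fintype.card G : ℚ) ^ d)
      * ((Nat.card {x : Fin d → G // ∑ i, p' i • x i = 0} : ℚ) / (Fintype.card G : ℚ) ^ d)
    ≤ (Nat.card {x : Fin d → G //
          (∑ i, p i • x i = 0) ∧ (∑ i, p' i • x i = 0)} : ℚ)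
        / (Fintype.card G : ℚ) ^ d :=
  linear_events_positively_correlated_general d p p'
end
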